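/- Let D be a nonempty compact set, f1, f2 : D → ℝ continuous with f2(x) > 0 on D, and let η* = max_{x ∈ D} f1(x)/f2(x), attained at x*. Then max_{x ∈ D}(f1(x) − η*·f2(x)) = 0 and this maximum is attained at x*. -/

import Mathlib

theorem stmt_4_general {X : Type*} (D : Set X)
    (f1 f2 : X → ℝ)
    (hf2pos : ∀ x ∈ D, 0 < f2 x)
    (xstar : X) (hx : xstar ∈ D) (ηstar : ℝ)
    (hηstar : ηstar = f1 xstar / f2 xstar)
    (hmax : ∀ x ∈ D, f1 x / f2 x ≤ f1 xstar / f2 xstar) :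
    (∀ x ∈ D, f1 x - ηstar * f2 x ≤ 0) ∧ f1 xstar - ηstar * f2 xstar = 0 := by
  subst hηstar
  refine ⟨fun x hxD => ?_, ?_⟩
  · have hle := (div_le_iff₀ (hf2pos x hxD)).1 (hmax x hxD)
    linarith
  · rw [div_mul_cancel₀ _ (hf2pos xstar hx).ne', sub_self]

theorem stmt_4 {X : Type*} [TopologicalSpace X] (D : Set X)
    (hD : D.Nonempty) (hDc : IsCompact D)
    (f1 f2 : X → ℝ) (hf1 : ContinuousOn f1 D) (hf2 : ContinuousOn f2 D)
    (hf2pos : ∀ x ∈ D, 0 < f2 x)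
    (xstar : X) (hx : xstar ∈ D) (ηstar : ℝ)
    (hηstar : ηstar = f1 xstar / f2 xstar)
    (hmax : ∀ x ∈ D, f1 x / f2 x ≤ f1 xstar / f2 xstar) :
    (∀ x ∈ D, f1 x - ηstar * f2 x ≤ 0) ∧ f1 xstar - ηstar * f2 xstar = 0 :=
  stmt_4_general D f1 f2 hf2pos xstar hx ηstar hηstar hmax
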